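/- Let n ≥ 1 and let A = (a_{ij}) ∈ (𝕊max^∨)^{n×n} be a symmetric matrix. Then A is tropical positive definite if and only if 𝟘 < a_{ii} for every i ∈ [n], and a_{ij} ⊙ a_{ij} < a_{ii} ⊙ a_{jj} for all i, j ∈ [n] with i ≠ j. -/

import Mathlib

/-!
Common framework: the symmetrized tropical semiring 𝕊max over a linearly
ordered abelian group Γ, represented concretely: an element is either 𝟘
(represented by `none`) or a pair of a modulus `c : Γ` and a sign
(positive, negative or balanced), matching the classes of the quotient
𝕋max²/ℛ described in the paper.
-/

namespace TropPaper

inductive SSign : Type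
  | pos
  | neg
  | bal
  deriving DecidableEq

/-- The symmetrized tropical semiring 𝕊max(Γ): `none` is 𝟘, and
`some (c, s)` is the class of modulus `c` and sign `s`. -/
def Smax (Γ : Type) : Type := Option (Γ × SSign)

/-- Γ is divisible. -/
def DivisibleGrp (Γ : Type) [AddCommGroup Γ] : Prop :=
  ∀ k : ℕ, 0 < k → ∀ a : Γ, ∃ b : Γ, k • b = a

section Defs

variable {Γ : Type} [AddCommGroup Γ] [LinearOrder Γ] [IsOrderedAddMonoid Γ]

/-- 𝟘 -/
def szero : Smax Γ := none

/-- 𝟙 -/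
def sone : Smax Γ := some ((0 : Γ), SSign.pos)

/-- modulus |·| : 𝕊max → 𝕋max = WithBot Γ -/
def smod : Smax Γ → WithBot Γ
  | none => ⊥
  | some (c, _) => (c : WithBot Γ)

def sgnMul : SSign → SSign → SSign
  | SSign.pos, t => t
  | SSign.neg, SSign.pos => SSign.neg
  | SSign.neg, SSign.neg => SSign.pos
  | SSign.neg, SSign.bal => SSign.bal
  | SSign.bal, _ => SSign.bal

/-- ⊕ on 𝕊max -/
def sadd : Smax Γ → Smax Γ → Smax Γ
  | none, b => b
  | some a, none => some a
  | some (c, s), some (d, t) =>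
      if c < d then some (d, t)
      else if d < c then some (c, s)
      else some (c, if s = t then s else SSign.bal)

/-- ⊖ (unary) on 𝕊max -/
def sneg : Smax Γ → Smax Γ
  | none => none
  | some (c, SSign.pos) => some (c, SSign.neg)
  | some (c, SSign.neg) => some (c, SSign.pos)
  | some (c, SSign.bal) => some (c, SSign.bal)

/-- ⊙ on 𝕊max -/
def smul : Smax Γ → Smax Γ → Smax Γ
  | none, _ => none
  | some _, none => none
  | some (c, s), some (d, t) => some (c + d, sgnMul s t)

/-- a ⊖ b -/
def ssub (a b : Smax Γ) : Smax Γ := sadd a (sneg b)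

/-- a° = a ⊖ a -/
def sbal (a : Smax Γ) : Smax Γ := ssub a a

/-- the positive element with the same modulus (|·| seen inside 𝕊max⊕) -/
def sabs : Smax Γ → Smax Γ
  | none => none
  | some (c, _) => some (c, SSign.pos)

/-- multiplicative inverse (of invertible, i.e. signed nonzero, elements) -/
def sinv : Smax Γ → Smax Γ
  | none => none
  | some (c, s) => some (-c, s)

/-- a^{⊙k} -/
def spow (a : Smax Γ) : ℕ → Smax Γ
  | 0 => sone
  | k + 1 => smul a (spow a k)

/-- membership in 𝕊max° (balanced elements together with 𝟘) -/
def IsBal : Smax Γ → Prop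
  | none => True
  | some (_, s) => s = SSign.bal

/-- membership in 𝕊max⊕ (positive elements together with 𝟘) -/
def IsPos : Smax Γ → Prop
  | none => True
  | some (_, s) => s = SSign.pos

/-- membership in 𝕊max^∨ (signed elements) -/
def IsSigned : Smax Γ → Prop
  | none => True
  | some (_, s) => s ≠ SSign.bal

/-- the balance relation a ∇ b -/
def Balance (a b : Smax Γ) : Prop := IsBal (ssub a b)

/-- a ⪯ b -/
def natLe (a b : Smax Γ) : Prop := sadd a b = b

/-- a ≤ b :⟺ b ⊖ a ∈ 𝕊max⊕ ∪ 𝕊max° -/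
def sle (a b : Smax Γ) : Prop := IsPos (ssub b a) ∨ IsBal (ssub b a)

/-- a < b :⟺ b ⊖ a ∈ 𝕊max⊕ ∖ {𝟘} -/
def slt (a b : Smax Γ) : Prop := IsPos (ssub b a) ∧ ssub b a ≠ szero

/-- finite ⊕-sum over a list -/
def sumS {α : Type} (l : List α) (f : α → Smax Γ) : Smax Γ :=
  (l.map f).foldr sadd szero

/-- finite ⊙-product over a list -/
def prodS {α : Type} (l : List α) (f : α → Smax Γ) : Smax Γ :=
  (l.map f).foldr smul sone

/-- the zero vector -/
def zeroVecS {n : ℕ} : Fin n → Smax Γ := fun _ => szero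

def VecSigned {n : ℕ} (x : Fin n → Smax Γ) : Prop := ∀ i, IsSigned (x i)

def MatSigned {n : ℕ} (A : Matrix (Fin n) (Fin n) (Smax Γ)) : Prop :=
  ∀ i j, IsSigned (A i j)

def SymmS {n : ℕ} (A : Matrix (Fin n) (Fin n) (Smax Γ)) : Prop :=
  ∀ i j, A i j = A j i

/-- A ⊙ v -/
def matVecS {n : ℕ} (A : Matrix (Fin n) (Fin n) (Smax Γ)) (v : Fin n → Smax Γ) :
    Fin n → Smax Γ :=
  fun i => sumS (List.finRange n) fun j => smul (A i j) (v j)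

/-- A ⊙ B -/
def matMulS {n : ℕ} (A B : Matrix (Fin n) (Fin n) (Smax Γ)) :
    Matrix (Fin n) (Fin n) (Smax Γ) :=
  Matrix.of fun i j => sumS (List.finRange n) fun l => smul (A i l) (B l j)

/-- the identity matrix I -/
def idMatS {n : ℕ} : Matrix (Fin n) (Fin n) (Smax Γ) :=
  Matrix.of fun i j => if i = j then sone else szero

/-- xᵀ ⊙ A ⊙ x -/
def quadFormS {n : ℕ} (A : Matrix (Fin n) (Fin n) (Smax Γ)) (x : Fin n → Smax Γ) :
    Smax Γ :=
  sumS (List.finRange n) fun i => sumS (List.finRange n) fun j =>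
    smul (x i) (smul (A i j) (x j))

/-- tropical positive definiteness (the quadratic-form condition) -/
def TPD {n : ℕ} (A : Matrix (Fin n) (Fin n) (Smax Γ)) : Prop :=
  ∀ x : Fin n → Smax Γ, VecSigned x → x ≠ zeroVecS → slt szero (quadFormS A x)

/-- tropical positive semidefiniteness -/
def TPSD {n : ℕ} (A : Matrix (Fin n) (Fin n) (Smax Γ)) : Prop :=
  ∀ x : Fin n → Smax Γ, VecSigned x → x ≠ zeroVecS → sle szero (quadFormS A x)

/-- sgn(π) ∈ {𝟙, ⊖𝟙} -/
def permSignS {n : ℕ} (π : Equiv.Perm (Fin n)) : Smax Γ :=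
  if (Equiv.Perm.sign π : ℤ) = 1 then sone else sneg sone

/-- the determinant over 𝕊max -/
noncomputable def detS {n : ℕ} (M : Matrix (Fin n) (Fin n) (Smax Γ)) : Smax Γ :=
  sumS (Finset.univ : Finset (Equiv.Perm (Fin n))).toList fun π =>
    smul (permSignS π) (prodS (List.finRange n) fun i => M i (π i))

/-- the adjugate matrix over 𝕊max -/
noncomputable def adjS {n : ℕ} (M : Matrix (Fin (n+1)) (Fin (n+1)) (Smax Γ)) :
    Matrix (Fin (n+1)) (Fin (n+1)) (Smax Γ) :=
  Matrix.of fun i j =>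
    smul (spow (sneg sone) (i.val + j.val))
      (detS (Matrix.of fun a b : Fin n => M (Fin.succAbove j a) (Fin.succAbove i b)))

/-- γ ⊙ I ⊖ A -/
def charMatS {n : ℕ} (γ : Smax Γ) (A : Matrix (Fin n) (Fin n) (Smax Γ)) :
    Matrix (Fin n) (Fin n) (Smax Γ) :=
  Matrix.of fun i j => ssub (smul γ (idMatS i j)) (A i j)

/-- tr_k(A) = ⊕_{|K| = k} det(A[K,K]) -/
noncomputable def trkS {n : ℕ} (k : ℕ) (A : Matrix (Fin n) (Fin n) (Smax Γ)) : Smax Γ :=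
  sumS ((Finset.univ : Finset (Fin n)).powersetCard k).attach.toList fun K =>
    detS (Matrix.of fun a b : Fin k =>
      A (K.1.orderEmbOfFin (Finset.mem_powersetCard.mp K.2).2 a)
        (K.1.orderEmbOfFin (Finset.mem_powersetCard.mp K.2).2 b))

/-- matrix power A^{⊙k} -/
def matPowS {n : ℕ} (A : Matrix (Fin n) (Fin n) (Smax Γ)) :
    ℕ → Matrix (Fin n) (Fin n) (Smax Γ)
  | 0 => idMatS
  | k + 1 => matMulS A (matPowS A k)

/-- partial Kleene sums I ⊕ A ⊕ ⋯ ⊕ A^{⊙m} -/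
def starPartialS {n : ℕ} (A : Matrix (Fin n) (Fin n) (Smax Γ)) (m : ℕ) :
    Matrix (Fin n) (Fin n) (Smax Γ) :=
  Matrix.of fun i j => sumS (List.range (m+1)) fun k => matPowS A k i j

/-- the diagonal matrix D^(k) with diagonal (γ₁,…,γ_{k−1},𝟘,…,𝟘) (0-based k) -/
def DmatS {n : ℕ} (A : Matrix (Fin n) (Fin n) (Smax Γ)) (k : Fin n) :
    Matrix (Fin n) (Fin n) (Smax Γ) :=
  Matrix.of fun i j => if i = j ∧ i < k then A i i else szero

/-- the complementary matrix A^(k) -/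
def AmatS {n : ℕ} (A : Matrix (Fin n) (Fin n) (Smax Γ)) (k : Fin n) :
    Matrix (Fin n) (Fin n) (Smax Γ) :=
  Matrix.of fun i j => if i ≠ j ∨ k ≤ i then A i j else szero

/-- M = (γ⊙I ⊖ D^(k))^{⊙−1} ⊙ A^(k) -/
def MmatS {n : ℕ} (A : Matrix (Fin n) (Fin n) (Smax Γ)) (k : Fin n) :
    Matrix (Fin n) (Fin n) (Smax Γ) :=
  Matrix.of fun i j =>
    smul (sinv (if i < k then sneg (A i i) else A k k)) (AmatS A k i j)

/-- λ_k = (⊖𝟙)^{⊙(k−1)} ⊙ γ₁ ⊙ ⋯ ⊙ γ_{k−1} ⊙ γ^{⊙(n−k)} (0-based k, size n) -/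
def lamkS {n : ℕ} (A : Matrix (Fin n) (Fin n) (Smax Γ)) (k : Fin n) : Smax Γ :=
  smul (spow (sneg sone) k.val)
    (smul (prodS ((List.finRange n).filter (fun i => i < k)) fun i => A i i)
      (spow (A k k) (n - 1 - k.val)))

/-- irreducibility: the digraph of nonzero entries is strongly connected -/
def IrreducibleS {n : ℕ} (A : Matrix (Fin n) (Fin n) (Smax Γ)) : Prop :=
  ∀ i j : Fin n, Relation.ReflTransGen (fun a b => A a b ≠ szero) i j

/-- diagonal entries sorted non-increasingly for ⪯ -/
def DiagSortedS {n : ℕ} (A : Matrix (Fin n) (Fin n) (Smax Γ)) : Prop :=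
  ∀ i j : Fin n, i ≤ j → natLe (A j j) (A i i)

/-! 𝕋max-side notions (for the characteristic polynomial of |A|). -/

/-- finite max over a list in 𝕋max -/
def sumT {α : Type} (l : List α) (f : α → WithBot Γ) : WithBot Γ :=
  (l.map f).foldr max ⊥

/-- finite ⊙-product over a list in 𝕋max -/
def prodT {α : Type} (l : List α) (f : α → WithBot Γ) : WithBot Γ :=
  (l.map f).foldr (· + ·) (0 : WithBot Γ)

/-- the permanent over 𝕋max -/
noncomputable def perT {n : ℕ} (M : Matrix (Fin n) (Fin n) (WithBot Γ)) : WithBot Γ :=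
  sumT (Finset.univ : Finset (Equiv.Perm (Fin n))).toList fun π =>
    prodT (List.finRange n) fun i => M i (π i)

/-- coefficient of X^k in the 𝕋max-characteristic polynomial of B -/
noncomputable def charCoeffT {n : ℕ} (B : Matrix (Fin n) (Fin n) (WithBot Γ)) (k : ℕ) : WithBot Γ :=
  if k ≤ n then
    sumT ((Finset.univ : Finset (Fin n)).powersetCard (n - k)).attach.toList fun K =>
      perT (Matrix.of fun a b : Fin (n - k) =>
        B (K.1.orderEmbOfFin (Finset.mem_powersetCard.mp K.2).2 a)
          (K.1.orderEmbOfFin (Finset.mem_powersetCard.mp K.2).2 b))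
  else ⊥

/-- multiplicity of x as a 𝕋max-root of the formal polynomial of degree ≤ n
with coefficients Q: for x = ⊥ it is the lower degree, for x = c ∈ Γ it is the
difference between the largest and smallest exponents attaining
max_k (Q_k + k·c). -/
noncomputable def rootMultT (n : ℕ) (Q : ℕ → WithBot Γ) (x : WithBot Γ) : ℕ :=
  WithBot.recBotCoe
    (sInf {k | Q k ≠ ⊥})
    (fun c =>
      sSup {k | k ≤ n ∧ Q k + ((k • c : Γ) : WithBot Γ)
              = sumT (List.range (n+1)) (fun l => Q l + ((l • c : Γ) : WithBot Γ))}
        - sInf {k | k ≤ n ∧ Q k + ((k • c : Γ) : WithBot Γ)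
              = sumT (List.range (n+1)) (fun l => Q l + ((l • c : Γ) : WithBot Γ))})
    x

end Defs

/-- the signed valuation associated with a valuation v on an ordered field L -/
def svMap {Γ : Type} [AddCommGroup Γ] [LinearOrder Γ] [IsOrderedAddMonoid Γ] {L : Type} [Field L] [LinearOrder L] [IsStrictOrderedRing L]
    (v : L → WithBot Γ) (b : L) : Smax Γ :=
  if b = 0 then szero
  else if 0 < b then WithBot.recBotCoe szero (fun c => some (c, SSign.pos)) (v b)
  else WithBot.recBotCoe szero (fun c => some (c, SSign.neg)) (v b)

end TropPaper

/-!
An element `a` of 𝕊max is the class `a⁺ ⊖ a⁻` of the pair `(posPart a, negPart a) ∈ 𝕋max²`, and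
⊕ is componentwise `max` on pairs. Hence `𝟘 < xᵀ ⊙ A ⊙ x` exactly when the largest modulus of a
negative term `x_i ⊙ a_ij ⊙ x_j` is strictly below the largest modulus of a positive one.
The diagonal terms `x_i ⊙ a_ii ⊙ x_i` are positive, and for `x_i, x_j ≠ 𝟘` the condition
`a_ij ⊙ a_ij < a_ii ⊙ a_jj` says `2 |x_i a_ij x_j| < |x_i a_ii x_i| + |x_j a_jj x_j|`, so no
off-diagonal term reaches the maximum. Conversely, unit vectors give `𝟘 < a_ii`, and if
`a_ii ⊙ a_jj ⪯ a_ij ⊙ a_ij` then the vector with `x_i = ⊖a_ij`, `x_j = a_ii` has the negative term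
`⊖ a_ij ⊙ a_ij ⊙ a_ii` of maximal modulus.
-/

namespace TropPaper

section Signs

variable {Γ : Type}

def posPart : Smax Γ → WithBot Γ
  | some (c, SSign.pos) | some (c, SSign.bal) => c
  | _ => ⊥

def negPart : Smax Γ → WithBot Γ
  | some (c, SSign.neg) | some (c, SSign.bal) => c
  | _ => ⊥

theorem IsPos.posPart_eq {a : Smax Γ} (ha : IsPos a) : posPart a = smod a := by
  rcases a with _ | ⟨c, s⟩
  · rfl
  · cases (ha : s = SSign.pos); rfl

theorem IsPos.negPart_eq {a : Smax Γ} (ha : IsPos a) : negPart a = ⊥ := by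
  rcases a with _ | ⟨c, s⟩
  · rfl
  · cases (ha : s = SSign.pos); rfl

theorem negPart_sneg (a : Smax Γ) : negPart (sneg a) = posPart a := by
  rcases a with _ | ⟨c, _ | _ | _⟩ <;> rfl

theorem smod_sneg (a : Smax Γ) : smod (sneg a) = smod a := by
  rcases a with _ | ⟨c, _ | _ | _⟩ <;> rfl

theorem IsSigned.sneg {a : Smax Γ} (ha : IsSigned a) : IsSigned (sneg a) := by
  rcases a with _ | ⟨c, _ | _ | _⟩ <;> simp_all [IsSigned, TropPaper.sneg]

theorem smod_ne_bot {a : Smax Γ} (ha : a ≠ szero) : smod a ≠ ⊥ := by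
  rcases a with _ | ⟨c, s⟩
  · exact absurd rfl ha
  · exact WithBot.coe_ne_bot

theorem sgnMul_assoc (s t u : SSign) : sgnMul (sgnMul s t) u = sgnMul s (sgnMul t u) := by
  cases s <;> cases t <;> cases u <;> rfl

theorem sgnMul_comm (s t : SSign) : sgnMul s t = sgnMul t s := by
  cases s <;> cases t <;> rfl

end Signs

section Parts

variable {Γ : Type} [LinearOrder Γ]

theorem posPart_le_smod (a : Smax Γ) : posPart a ≤ smod a := by
  rcases a with _ | ⟨c, _ | _ | _⟩ <;> simp [posPart, smod]

theorem negPart_le_smod (a : Smax Γ) : negPart a ≤ smod a := by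
  rcases a with _ | ⟨c, _ | _ | _⟩ <;> simp [negPart, smod]

/-- The class `p ⊖ q` of the pair `(p, q) ∈ 𝕋max²`. -/
def ofParts : WithBot Γ → WithBot Γ → Smax Γ
  | ⊥, ⊥ => none
  | (c : Γ), ⊥ => some (c, SSign.pos)
  | ⊥, (d : Γ) => some (d, SSign.neg)
  | (c : Γ), (d : Γ) =>
      if d < c then some (c, SSign.pos) else if c < d then some (d, SSign.neg)
      else some (c, SSign.bal)

theorem ofParts_posPart_negPart (a : Smax Γ) : ofParts (posPart a) (negPart a) = a := by
  rcases a with _ | ⟨c, _ | _ | _⟩ <;> simp [ofParts, posPart, negPart] <;> rfl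

theorem sneg_ofParts (p q : WithBot Γ) : sneg (ofParts p q) = ofParts q p := by
  induction p using WithBot.recBotCoe <;> induction q using WithBot.recBotCoe <;>
    simp only [ofParts] <;> (try split_ifs) <;> simp only [sneg] <;> grind

theorem sadd_ofParts (p q p' q' : WithBot Γ) :
    sadd (ofParts p q) (ofParts p' q') = ofParts (max p p') (max q q') := by
  induction p using WithBot.recBotCoe <;> induction q using WithBot.recBotCoe <;>
    induction p' using WithBot.recBotCoe <;> induction q' using WithBot.recBotCoe <;>
    simp only [ofParts, max_bot_left, max_bot_right, ← WithBot.coe_max] <;>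
    (try split_ifs) <;> simp only [sadd] <;> (try split_ifs) <;> grind

theorem ssub_ofParts (p q p' q' : WithBot Γ) :
    ssub (ofParts p q) (ofParts p' q') = ofParts (max p q') (max q p') := by
  rw [ssub, sneg_ofParts, sadd_ofParts]

theorem ssub_szero (a : Smax Γ) : ssub a szero = a := by
  rcases a with _ | ⟨c, _ | _ | _⟩ <;> rfl

theorem slt_iff_szero_slt_ssub (a b : Smax Γ) : slt a b ↔ slt szero (ssub b a) := by
  rw [slt, slt, ssub_szero]

theorem szero_slt_ofParts_iff (p q : WithBot Γ) : slt szero (ofParts p q) ↔ q < p := by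
  induction p using WithBot.recBotCoe <;> induction q using WithBot.recBotCoe <;>
    simp only [ofParts] <;> (try split_ifs) <;> simp [slt, ssub, sneg, sadd, szero, IsPos] <;>
    grind

theorem slt_ofParts_iff (p q p' q' : WithBot Γ) :
    slt (ofParts p q) (ofParts p' q') ↔ max p q' < max p' q := by
  rw [slt_iff_szero_slt_ssub, ssub_ofParts, szero_slt_ofParts_iff, max_comm q' p]

theorem szero_slt_iff {a : Smax Γ} : slt szero a ↔ IsPos a ∧ a ≠ szero := by
  rw [slt, ssub_szero]

theorem slt_iff_smod_lt {a b : Smax Γ} (ha : IsPos a) (hb : IsPos b) :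
    slt a b ↔ smod a < smod b := by
  have h := slt_ofParts_iff (posPart a) (negPart a) (posPart b) (negPart b)
  rwa [ofParts_posPart_negPart, ofParts_posPart_negPart, ha.posPart_eq, ha.negPart_eq,
    hb.posPart_eq, hb.negPart_eq, max_bot_right, max_bot_right] at h

theorem sumT_eq_sup {α : Type} [DecidableEq α] (l : List α) (g : α → WithBot Γ) :
    sumT l g = l.toFinset.sup g := by
  induction l with
  | nil => rfl
  | cons a l ih => rw [List.toFinset_cons, Finset.sup_insert, ← ih]; rfl

theorem sumS_ofParts {α : Type} (l : List α) (p q : α → WithBot Γ) :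
    sumS l (fun a => ofParts (p a) (q a)) = ofParts (sumT l p) (sumT l q) := by
  induction l with
  | nil => rfl
  | cons a l ih => exact (congrArg (sadd _) ih).trans (sadd_ofParts _ _ _ _)

theorem sumS_eq_ofParts {α : Type} (l : List α) (f : α → Smax Γ) :
    sumS l f = ofParts (sumT l (posPart ∘ f)) (sumT l (negPart ∘ f)) := by
  simpa only [Function.comp_apply, ofParts_posPart_negPart] using
    sumS_ofParts l (posPart ∘ f) (negPart ∘ f)

end Parts

section Mul

variable {Γ : Type} [AddCommGroup Γ]

theorem smod_smul (a b : Smax Γ) : smod (smul a b) = smod a + smod b := by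
  rcases a with _ | ⟨c, s⟩ <;> rcases b with _ | ⟨d, t⟩ <;> rfl

theorem smul_szero (a : Smax Γ) : smul a szero = szero := by
  rcases a with _ | _ <;> rfl

theorem sone_smul (a : Smax Γ) : smul sone a = a := by
  rcases a with _ | ⟨c, s⟩
  · rfl
  · simp only [smul, sone, zero_add]; rfl

theorem smul_sone (a : Smax Γ) : smul a sone = a := by
  rcases a with _ | ⟨c, s⟩
  · rfl
  · simp only [smul, sone, add_zero]; cases s <;> rfl

theorem smul_assoc (a b c : Smax Γ) : smul (smul a b) c = smul a (smul b c) := by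
  rcases a with _ | ⟨x, s⟩ <;> rcases b with _ | ⟨y, t⟩ <;> rcases c with _ | ⟨z, u⟩ <;>
    simp only [smul, add_assoc, sgnMul_assoc] <;> rfl

theorem smul_left_comm (a b c : Smax Γ) : smul a (smul b c) = smul b (smul a c) := by
  rcases a with _ | ⟨x, s⟩ <;> rcases b with _ | ⟨y, t⟩ <;> rcases c with _ | ⟨z, u⟩ <;> try rfl
  simp only [smul, add_left_comm x y, ← sgnMul_assoc, sgnMul_comm s t]
  rfl

theorem sneg_smul (a b : Smax Γ) : smul (sneg a) b = sneg (smul a b) := by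
  rcases a with _ | ⟨x, _ | _ | _⟩ <;> rcases b with _ | ⟨y, _ | _ | _⟩ <;> rfl

theorem IsPos.smul {a b : Smax Γ} (ha : IsPos a) (hb : IsPos b) : IsPos (smul a b) := by
  rcases a with _ | ⟨x, s⟩ <;> rcases b with _ | ⟨y, t⟩
  all_goals first | trivial | (cases (ha : s = SSign.pos); cases (hb : t = SSign.pos); rfl)

theorem isPos_smul_self {a : Smax Γ} (ha : IsSigned a) : IsPos (smul a a) := by
  rcases a with _ | ⟨x, _ | _ | _⟩ <;> trivial

end Mul

section QuadForm

variable {Γ : Type} [AddCommGroup Γ] {n : ℕ}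

def quadTerm (A : Matrix (Fin n) (Fin n) (Smax Γ)) (x : Fin n → Smax Γ) (i j : Fin n) : Smax Γ :=
  smul (x i) (smul (A i j) (x j))

theorem szero_slt_quadFormS_iff [LinearOrder Γ] (A : Matrix (Fin n) (Fin n) (Smax Γ))
    (x : Fin n → Smax Γ) :
    slt szero (quadFormS A x) ↔
      (Finset.univ.sup fun ij : Fin n × Fin n => negPart (quadTerm A x ij.1 ij.2)) <
        Finset.univ.sup fun ij : Fin n × Fin n => posPart (quadTerm A x ij.1 ij.2) := by
  have hrow : ∀ i, sumS (List.finRange n) (quadTerm A x i) =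
      ofParts (Finset.univ.sup fun j => posPart (quadTerm A x i j))
        (Finset.univ.sup fun j => negPart (quadTerm A x i j)) := fun i => by
    rw [sumS_eq_ofParts, sumT_eq_sup, sumT_eq_sup, List.toFinset_finRange]; rfl
  change slt szero (sumS (List.finRange n) fun i => sumS (List.finRange n) (quadTerm A x i)) ↔ _
  simp only [hrow]
  rw [sumS_ofParts, szero_slt_ofParts_iff, sumT_eq_sup, sumT_eq_sup, List.toFinset_finRange,
    ← Finset.univ_product_univ, Finset.sup_product_left, Finset.sup_product_left]

theorem szero_slt_diag_of_tpd [LinearOrder Γ] {A : Matrix (Fin n) (Fin n) (Smax Γ)} (hA : TPD A)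
    (i : Fin n) : slt szero (A i i) := by
  set x : Fin n → Smax Γ := Function.update zeroVecS i sone
  have hxi : x i = sone := Function.update_self ..
  have hxk : ∀ k, k ≠ i → x k = szero := fun k hk => Function.update_of_ne hk ..
  have hx : VecSigned x := fun k => by
    rcases eq_or_ne k i with rfl | hk
    · rw [hxi]; exact nofun
    · rw [hxk k hk]; trivial
  have hx0 : x ≠ zeroVecS := fun h => by
    simpa [hxi, sone, zeroVecS, szero] using congrFun h i
  have hterm : ∀ k l, quadTerm A x k l = if k = i ∧ l = i then A i i else szero := by
    intro k l
    rcases eq_or_ne k i with rfl | hk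
    · rcases eq_or_ne l k with rfl | hl
      · simp only [quadTerm, hxi, sone_smul, smul_sone, and_self, if_true]
      · simp only [quadTerm, hxk l hl, smul_szero, hl, and_false, if_false]
    · simp only [quadTerm, hxk k hk, hk, false_and, if_false]; rfl
  have h := (szero_slt_quadFormS_iff A x).1 (hA x hx hx0)
  rw [← ofParts_posPart_negPart (A i i), szero_slt_ofParts_iff]
  calc negPart (A i i) ≤ _ := by
        simpa [hterm] using Finset.le_sup (f := fun ij : Fin n × Fin n =>
          negPart (quadTerm A x ij.1 ij.2)) (Finset.mem_univ (i, i))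
    _ < _ := h
    _ ≤ posPart (A i i) := Finset.sup_le fun kl _ => by
        rw [hterm]; split_ifs
        · rfl
        · exact bot_le

theorem not_szero_slt_quadFormS [LinearOrder Γ] {A : Matrix (Fin n) (Fin n) (Smax Γ)}
    {x : Fin n → Smax Γ} {M : WithBot Γ} {i j : Fin n} (hneg : M ≤ negPart (quadTerm A x i j))
    (hbound : ∀ k l, smod (quadTerm A x k l) ≤ M) : ¬ slt szero (quadFormS A x) := by
  rw [szero_slt_quadFormS_iff, not_lt]
  calc Finset.univ.sup (fun kl : Fin n × Fin n => posPart (quadTerm A x kl.1 kl.2))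
      ≤ M := Finset.sup_le fun kl _ => (posPart_le_smod _).trans (hbound kl.1 kl.2)
    _ ≤ negPart (quadTerm A x i j) := hneg
    _ ≤ _ := Finset.le_sup (f := fun kl : Fin n × Fin n => negPart (quadTerm A x kl.1 kl.2))
        (Finset.mem_univ (i, j))

theorem slt_smul_self_iff [LinearOrder Γ] {a b c : Smax Γ} (hb : IsSigned b) (ha : IsPos a)
    (hc : IsPos c) :
    slt (smul b b) (smul a c) ↔ smod b + smod b < smod a + smod c := by
  rw [slt_iff_smod_lt (isPos_smul_self hb) (ha.smul hc), smod_smul, smod_smul]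

end QuadForm

section Ordered

variable {Γ : Type} [AddCommGroup Γ] [LinearOrder Γ] [IsOrderedAddMonoid Γ] {n : ℕ}

theorem smod_smul_smul_lt {a b c x y : Smax Γ} {P : WithBot Γ}
    (h : smod b + smod b < smod a + smod c) (hP : ⊥ < P)
    (hx : smod (smul x (smul a x)) ≤ P) (hy : smod (smul y (smul c y)) ≤ P) :
    smod (smul x (smul b y)) < P := by
  simp only [smod_smul] at hx hy ⊢
  rcases eq_or_ne (smod x) ⊥ with hx0 | hx0
  · simpa [hx0] using hP
  rcases eq_or_ne (smod y) ⊥ with hy0 | hy0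
  · simpa [hy0] using hP
  have hu : smod x + (smod b + smod y) + (smod x + (smod b + smod y)) <
      smod x + (smod a + smod x) + (smod y + (smod c + smod y)) :=
    calc _ = smod x + smod x + (smod y + smod y) + (smod b + smod b) := by abel
      _ < smod x + smod x + (smod y + smod y) + (smod a + smod c) :=
        WithBot.add_lt_add_left (by simp [hx0, hy0]) h
      _ = _ := by abel
  simpa using (min_lt_max_of_add_lt_add hu).trans_le (max_le hx hy)

theorem tpd_of_forall_slt {A : Matrix (Fin n) (Fin n) (Smax Γ)} (hsgn : MatSigned A)
    (hdiag : ∀ i, slt szero (A i i))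
    (hoff : ∀ i j, i ≠ j → slt (smul (A i j) (A i j)) (smul (A i i) (A j j))) : TPD A := by
  have hpos : ∀ i, IsPos (A i i) := fun i => (szero_slt_iff.1 (hdiag i)).1
  intro x hx hx0
  obtain ⟨k, hk⟩ : ∃ k, x k ≠ szero := by
    by_contra! h
    exact hx0 (funext h)
  rw [szero_slt_quadFormS_iff]
  set P := Finset.univ.sup fun ij : Fin n × Fin n => posPart (quadTerm A x ij.1 ij.2)
  have hdiagPos : ∀ i, IsPos (quadTerm A x i i) := fun i => by
    rw [quadTerm, smul_left_comm]
    exact (hpos i).smul (isPos_smul_self (hx i))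
  have hdiagP : ∀ i, smod (quadTerm A x i i) ≤ P := fun i => by
    rw [← (hdiagPos i).posPart_eq]
    exact Finset.le_sup (f := fun ij : Fin n × Fin n => posPart (quadTerm A x ij.1 ij.2))
      (Finset.mem_univ (i, i))
  have hP : ⊥ < P := by
    refine lt_of_lt_of_le (bot_lt_iff_ne_bot.2 ?_) (hdiagP k)
    simp only [quadTerm, smod_smul]
    simp [smod_ne_bot hk, smod_ne_bot (szero_slt_iff.1 (hdiag k)).2]
  refine (Finset.sup_lt_iff hP).2 fun ⟨i, j⟩ _ => ?_
  rcases eq_or_ne i j with rfl | hij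
  · rw [(hdiagPos i).negPart_eq]
    exact hP
  · refine (negPart_le_smod _).trans_lt (smod_smul_smul_lt ?_ hP (hdiagP i) (hdiagP j))
    exact (slt_smul_self_iff (hsgn i j) (hpos i) (hpos j)).1 (hoff i j hij)

theorem slt_smul_self_of_tpd {A : Matrix (Fin n) (Fin n) (Smax Γ)} (hsym : SymmS A)
    (hsgn : MatSigned A) (hA : TPD A) {i j : Fin n} (hij : i ≠ j) :
    slt (smul (A i j) (A i j)) (smul (A i i) (A j j)) := by
  have hi := szero_slt_iff.1 (szero_slt_diag_of_tpd hA i)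
  have hj := szero_slt_iff.1 (szero_slt_diag_of_tpd hA j)
  rw [slt_smul_self_iff (hsgn i j) hi.1 hj.1]
  by_contra! hle
  set x : Fin n → Smax Γ :=
    Function.update (Function.update zeroVecS i (sneg (A i j))) j (A i i)
  have hxj : x j = A i i := Function.update_self ..
  have hxi : x i = sneg (A i j) := (Function.update_of_ne hij ..).trans (Function.update_self ..)
  have hxk : ∀ k, k ≠ i → k ≠ j → x k = szero := fun k hki hkj =>
    (Function.update_of_ne hkj ..).trans (Function.update_of_ne hki ..)
  have hx : VecSigned x := fun k => by
    rcases eq_or_ne k j with rfl | hkj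
    · rw [hxj]; exact hsgn i i
    rcases eq_or_ne k i with rfl | hki
    · rw [hxi]; exact (hsgn k j).sneg
    rw [hxk k hki hkj]; trivial
  have hx0 : x ≠ zeroVecS := fun h => hi.2 (hxj.symm.trans (congrFun h j))
  have hneg : negPart (quadTerm A x i j) = smod (A i j) + (smod (A i j) + smod (A i i)) := by
    have hpos : IsPos (smul (A i j) (smul (A i j) (A i i))) := by
      rw [← smul_assoc]; exact (isPos_smul_self (hsgn i j)).smul hi.1
    rw [quadTerm, hxi, hxj, sneg_smul, negPart_sneg, hpos.posPart_eq, smod_smul, smod_smul]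
  have hbound :
      ∀ k l, smod (quadTerm A x k l) ≤ smod (A i j) + (smod (A i j) + smod (A i i)) := by
    intro k l
    by_cases hk : x k = szero
    · rw [quadTerm, hk]; exact bot_le
    by_cases hl : x l = szero
    · rw [quadTerm, hl, smul_szero, smul_szero]; exact bot_le
    have hk' : k = i ∨ k = j := by by_contra! h; exact hk (hxk k h.1 h.2)
    have hl' : l = i ∨ l = j := by by_contra! h; exact hl (hxk l h.1 h.2)
    rcases hk' with hk' | hk' <;> rcases hl' with hl' | hl' <;> subst k l <;>
      simp only [quadTerm, smod_smul, hxi, hxj, smod_sneg]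
    · exact le_of_eq (by abel)
    · exact le_rfl
    · rw [hsym j i]; exact le_of_eq (by abel)
    · calc smod (A i i) + (smod (A j j) + smod (A i i))
          = smod (A i i) + smod (A j j) + smod (A i i) := by abel
        _ ≤ smod (A i j) + smod (A i j) + smod (A i i) := by gcongr
        _ = _ := by abel
  exact not_szero_slt_quadFormS hneg.ge hbound (hA x hx hx0)

end Ordered

theorem tpd_characterization_general {Γ : Type} [AddCommGroup Γ] [LinearOrder Γ] [IsOrderedAddMonoid Γ]
    {n : ℕ} (A : Matrix (Fin n) (Fin n) (Smax Γ)) (hsym : SymmS A) (hsgn : MatSigned A) :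
    TPD A ↔
      ((∀ i, slt szero (A i i)) ∧
        ∀ i j, i ≠ j → slt (smul (A i j) (A i j)) (smul (A i i) (A j j))) :=
  ⟨fun hA => ⟨szero_slt_diag_of_tpd hA, fun _ _ => slt_smul_self_of_tpd hsym hsgn hA⟩,
    fun ⟨hdiag, hoff⟩ => tpd_of_forall_slt hsgn hdiag hoff⟩

/-- a symmetric matrix over 𝕊max^∨ is tropical positive definite
iff its diagonal entries are positive nonzero and a_{ij}⊙a_{ij} < a_{ii}⊙a_{jj}
for all i ≠ j. -/
theorem tpd_characterization {Γ : Type} [AddCommGroup Γ] [LinearOrder Γ] [IsOrderedAddMonoid Γ] [Nontrivial Γ]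
    (hdiv : DivisibleGrp Γ) {n : ℕ} (hn : 1 ≤ n)
    (A : Matrix (Fin n) (Fin n) (Smax Γ)) (hsym : SymmS A) (hsgn : MatSigned A) :
    TPD A ↔
      ((∀ i, slt szero (A i i)) ∧
        ∀ i j, i ≠ j → slt (smul (A i j) (A i j)) (smul (A i i) (A j j))) :=
  tpd_characterization_general A hsym hsgn

end TropPaper
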